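/- Let t ≥ 2 and n = 2t. Let F₀ = {σ ∈ S_n : σ(i) = i for all i ∈ [t]} be the pointwise stabilizer of [t], and let F₁ = {σ ∈ S_n : |fix(σ) ∩ [t+2]| ≥ t+1}. Then |F₀| = t! = (t−2)!·(t²−t) and |F₁| = (t−2)!·(t²−3); consequently |F₁| = |F₀| when t = 3 and |F₁| > |F₀| when t > 3. -/
import Mathlib


open Equiv Finset
open scoped Classical

noncomputable section

/-- A common cycle of two permutations `σ` and `π`: a nonempty subset `B` invariant
under both, on which they agree, and on which `σ` acts as a single cycle. -/
def IsCommonCycle {n : ℕ} (σ π : Equiv.Perm (Fin n)) (B : Finset (Fin n)) : Prop :=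
  B.Nonempty ∧ (∀ x ∈ B, σ x ∈ B) ∧ (∀ x ∈ B, π x ∈ B) ∧
  (∀ x ∈ B, σ x = π x) ∧ (∀ x ∈ B, ∀ y ∈ B, σ.SameCycle x y)

/-- A family of permutations is `t`-cycle-intersecting if any two of its members
have at least `t` common cycles on pairwise disjoint subsets. -/
def TCycleIntersecting {n : ℕ} (t : ℕ) (F : Set (Equiv.Perm (Fin n))) : Prop :=
  ∀ σ ∈ F, ∀ π ∈ F, ∃ 𝒞 : Finset (Finset (Fin n)),
    t ≤ 𝒞.card ∧ (∀ B ∈ 𝒞, IsCommonCycle σ π B) ∧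
    (𝒞 : Set (Finset (Fin n))).Pairwise fun A B => Disjoint A B

/-- The `ij`-fixing of a permutation: if `σ i = j` then make `i` a fixed point and
send `σ⁻¹ i` to `j`, leaving everything else unchanged. -/
def ijFix {n : ℕ} (i j : Fin n) (σ : Equiv.Perm (Fin n)) : Equiv.Perm (Fin n) :=
  if σ i = j then σ * Equiv.swap i (σ⁻¹ i) else σ

/-- The `ij`-fixing operation on a family of permutations. -/
def fixFamOp {n : ℕ} (i j : Fin n) (A : Set (Equiv.Perm (Fin n))) :
    Set (Equiv.Perm (Fin n)) :=
  (fun σ => if ijFix i j σ ∈ A then σ else ijFix i j σ) '' A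

/-- A family is fixed if it is closed under all `ij`-fixing operations. -/
def IsFixedFam {n : ℕ} (A : Set (Equiv.Perm (Fin n))) : Prop :=
  ∀ i j : Fin n, i ≠ j → fixFamOp i j A = A

/-- The `(i,j)`-compression of a permutation: if `σ i ≠ i` and `σ j = j`, then
fix `i`, send `j` to `σ i` and `σ⁻¹ i` to `j`; otherwise leave `σ` unchanged. -/
def compPerm {n : ℕ} (i j : Fin n) (σ : Equiv.Perm (Fin n)) : Equiv.Perm (Fin n) :=
  if σ i ≠ i ∧ σ j = j then (Equiv.swap i (σ i) * Equiv.swap i j) * σ else σ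

/-- The `(i,j)`-compression operation on a family of permutations. -/
def compFam {n : ℕ} (i j : Fin n) (A : Set (Equiv.Perm (Fin n))) :
    Set (Equiv.Perm (Fin n)) :=
  (fun σ => if compPerm i j σ ∈ A then σ else compPerm i j σ) '' A

/-- A family is compressed if it is closed under all `(i,j)`-compressions. -/
def IsCompressedFam {n : ℕ} (A : Set (Equiv.Perm (Fin n))) : Prop :=
  ∀ i j : Fin n, i < j → compFam i j A = A

/-- `F` is the stabilizer of `t` points: there are `t` distinct points such that `F`
consists exactly of the permutations fixing all of them. -/
def IsTPointStabilizer {n : ℕ} (t : ℕ) (F : Set (Equiv.Perm (Fin n))) : Prop :=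
  ∃ a : Fin t ↪ Fin n, F = {σ | ∀ k, σ (a k) = a k}

/-- The set of fixed points of a permutation. -/
def fixSet {n : ℕ} (σ : Equiv.Perm (Fin n)) : Finset (Fin n) :=
  Finset.univ.filter fun x => σ x = x

/-- The up-permutation of a set `B`: all permutations fixing every element of `B`. -/
def UpSet {n : ℕ} (B : Finset (Fin n)) : Set (Equiv.Perm (Fin n)) :=
  {σ | ∀ x ∈ B, σ x = x}

/-- The up-permutation of a collection of sets. -/
def UpFam {n : ℕ} (g : Set (Finset (Fin n))) : Set (Equiv.Perm (Fin n)) :=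
  ⋃ B ∈ g, UpSet B

/-- `g` is a generating set for `F`: it contains no set of size `n-1` and
`Up(g) = F`. -/
def IsGenSet {n : ℕ} (g : Set (Finset (Fin n))) (F : Set (Equiv.Perm (Fin n))) : Prop :=
  (∀ B ∈ g, B.card ≠ n - 1) ∧ UpFam g = F

/-- `s⁺(B)`: the largest element of `B`, in the 1-based numbering of `[n] = {1,…,n}`
(so `s⁺(∅) = 0`). -/
def sPlus {n : ℕ} (B : Finset (Fin n)) : ℕ := B.sup fun x => (x : ℕ) + 1

/-- `s⁺(g) = max {s⁺(B) : B ∈ g}`. -/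
def sPlusFam {n : ℕ} (g : Set (Finset (Fin n))) : ℕ := sSup (sPlus '' g)

/-- `s_min(G(F)) = min {s⁺(g) : g a generating set of F}`. -/
def sMin {n : ℕ} (F : Set (Equiv.Perm (Fin n))) : ℕ :=
  sInf (sPlusFam '' {g | IsGenSet g F})

/-- `L(B)`: all sets obtained from `B` by left-shifting, i.e. sets of the same size
whose `i`-th smallest element is at most the `i`-th smallest element of `B`. -/
def LSet {n : ℕ} (B : Finset (Fin n)) : Set (Finset (Fin n)) :=
  {A | ∃ h : A.card = B.card, ∀ i : Fin B.card,
      A.orderEmbOfFin h i ≤ B.orderEmbOfFin rfl i}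

/-- `L(g) = ⋃_{B ∈ g} L(B)`. -/
def LFam {n : ℕ} (g : Set (Finset (Fin n))) : Set (Finset (Fin n)) :=
  ⋃ B ∈ g, LSet B

/-- `L_*(g)`: the minimal (under inclusion) elements of `L(g)`. -/
def Lstar {n : ℕ} (g : Set (Finset (Fin n))) : Set (Finset (Fin n)) :=
  {A | A ∈ LFam g ∧ ∀ A' ∈ LFam g, A' ⊆ A → A' = A}

/-- The interval `[m] = {1,…,m}` inside `Fin n` (1-based). -/
def Ival (n m : ℕ) : Finset (Fin n) := Finset.univ.filter fun x => (x : ℕ) < m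

/-- `D(E) = {σ : fix(σ) ∩ [s⁺(E)] = E}`. -/
def DSet {n : ℕ} (E : Finset (Fin n)) : Set (Equiv.Perm (Fin n)) :=
  {σ | fixSet σ ∩ Ival n (sPlus E) = E}

lemma card_fixing {n : ℕ} (S : Finset (Fin n)) :
    (Finset.univ.filter fun σ : Equiv.Perm (Fin n) => ∀ x ∈ S, σ x = x).card
      = Nat.factorial (n - S.card) := by
  have e : Equiv.Perm {x : Fin n // x ∉ S} ≃ {σ : Equiv.Perm (Fin n) // ∀ x ∈ S, σ x = x} := by
    refine (Equiv.Perm.subtypeEquivSubtypePerm (fun x => x ∉ S)).trans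
      (Equiv.subtypeEquiv (Equiv.refl _) ?_)
    intro σ
    simp only [Equiv.refl_apply, not_not]
  have h1 : Fintype.card {σ : Equiv.Perm (Fin n) // ∀ x ∈ S, σ x = x}
      = Nat.factorial (n - S.card) := by
    rw [← Fintype.card_congr e, Fintype.card_perm, Fintype.card_subtype]
    congr 1
    have : (Finset.univ.filter fun x : Fin n => x ∉ S) = Sᶜ := by ext x; simp
    rw [this, Finset.card_compl, Fintype.card_fin]
  rw [← h1, Fintype.card_subtype]

lemma card_Ival {n m : ℕ} (h : m ≤ n) : (Ival n m).card = m := by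
  have : Ival n m = Finset.map ⟨Fin.castLE h, Fin.castLE_injective h⟩ Finset.univ := by
    ext x
    simp only [Ival, Finset.mem_filter, Finset.mem_univ, true_and, Finset.mem_map,
      Function.Embedding.coeFn_mk]
    constructor
    · intro hx; exact ⟨⟨(x : ℕ), hx⟩, rfl⟩
    · rintro ⟨y, rfl⟩; exact y.2
  rw [this, Finset.card_map, Finset.card_univ, Fintype.card_fin]

/-- For `t ≥ 2` and `n = 2t`, the pointwise stabilizer `F₀` of `[t]` has size
`t! = (t-2)!·(t²-t)`, while the family `F₁` of permutations fixing at least `t+1`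
of the first `t+2` points has size `(t-2)!·(t²-3)`; consequently `|F₁| = |F₀|`
when `t = 3` and `|F₁| > |F₀|` when `t > 3`. -/
theorem stmt19 (t : ℕ) (ht : 2 ≤ t) :
    ({σ : Equiv.Perm (Fin (2 * t)) | ∀ x : Fin (2 * t), (x : ℕ) < t → σ x = x}.ncard
        = Nat.factorial t ∧
      Nat.factorial t = Nat.factorial (t - 2) * (t ^ 2 - t)) ∧
    {σ : Equiv.Perm (Fin (2 * t)) | t + 1 ≤ (fixSet σ ∩ Ival (2 * t) (t + 2)).card}.ncard
        = Nat.factorial (t - 2) * (t ^ 2 - 3) ∧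
    (t = 3 →
      {σ : Equiv.Perm (Fin (2 * t)) | t + 1 ≤ (fixSet σ ∩ Ival (2 * t) (t + 2)).card}.ncard
        = {σ : Equiv.Perm (Fin (2 * t)) | ∀ x : Fin (2 * t), (x : ℕ) < t → σ x = x}.ncard) ∧
    (3 < t →
      {σ : Equiv.Perm (Fin (2 * t)) | ∀ x : Fin (2 * t), (x : ℕ) < t → σ x = x}.ncard
        < {σ : Equiv.Perm (Fin (2 * t)) | t + 1 ≤ (fixSet σ ∩ Ival (2 * t) (t + 2)).card}.ncard) := by
  
  set n := 2 * t with hn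
  have ht2 : t + 2 ≤ n := by omega
  set I : Finset (Fin n) := Ival n (t + 2) with hIdef
  have hIcard : I.card = t + 2 := card_Ival ht2
  set P : Finset (Fin n) → Finset (Equiv.Perm (Fin n)) :=
    fun S => Finset.univ.filter fun σ => ∀ x ∈ S, σ x = x with hPdef
  have hPcard : ∀ S : Finset (Fin n), (P S).card = Nat.factorial (n - S.card) :=
    fun S => card_fixing S
  -- F0
  have hF0 : {σ : Equiv.Perm (Fin n) | ∀ x : Fin n, (x : ℕ) < t → σ x = x}
      = ↑(P (Ival n t)) := by
    ext σ
    simp only [Set.mem_setOf_eq, Finset.coe_filter, Ival, hPdef, Finset.mem_filter,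
      Finset.mem_univ, true_and, Set.mem_setOf_eq]
  have hF0card : {σ : Equiv.Perm (Fin n) | ∀ x : Fin n, (x : ℕ) < t → σ x = x}.ncard
      = Nat.factorial t := by
    rw [hF0, Set.ncard_coe_finset, hPcard, card_Ival (by omega : t ≤ n)]
    congr 1; omega
  -- F1 as a finset
  set Q : Finset (Equiv.Perm (Fin n)) :=
    Finset.univ.filter fun σ => t + 1 ≤ (fixSet σ ∩ I).card with hQdef
  have hF1 : {σ : Equiv.Perm (Fin n) | t + 1 ≤ (fixSet σ ∩ I).card} = ↑Q := by
    ext σ; simp [hQdef]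
  -- decomposition
  set R : Fin n → Finset (Equiv.Perm (Fin n)) :=
    fun i => (P (I.erase i)).filter fun σ => σ i ≠ i with hRdef
  have hfixmem : ∀ (σ : Equiv.Perm (Fin n)) (x : Fin n), x ∈ fixSet σ ↔ σ x = x := by
    intro σ x; simp [fixSet]
  have hQeq : Q = P I ∪ I.biUnion R := by
    ext σ
    simp only [hQdef, Finset.mem_filter, Finset.mem_univ, true_and, Finset.mem_union,
      Finset.mem_biUnion]
    constructor
    · intro hcard
      by_cases hall : ∀ x ∈ I, σ x = x
      · left; simp only [hPdef, Finset.mem_filter, Finset.mem_univ, true_and]; exact hall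
      · right
        push_neg at hall
        obtain ⟨i, hiI, hi⟩ := hall
        refine ⟨i, hiI, ?_⟩
        have hsub : fixSet σ ∩ I ⊆ I.erase i := by
          intro x hx
          rw [Finset.mem_inter, hfixmem] at hx
          exact Finset.mem_erase.2 ⟨fun h => hi (h ▸ hx.1), hx.2⟩
        have hcard' : (I.erase i).card = t + 1 := by
          rw [Finset.card_erase_of_mem hiI, hIcard]
          omega
        have : fixSet σ ∩ I = I.erase i :=
          Finset.eq_of_subset_of_card_le hsub (by rw [hcard']; omega)
        simp only [hRdef, Finset.mem_filter, hPdef, Finset.mem_univ, true_and, ne_eq]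
        refine ⟨fun x hx => ?_, hi⟩
        have := this ▸ hx
        rw [Finset.mem_inter, hfixmem] at this
        exact this.1
    · rintro (hσ | ⟨i, hiI, hσ⟩)
      · have : I ⊆ fixSet σ ∩ I := by
          intro x hx
          simp only [hPdef, Finset.mem_filter, Finset.mem_univ, true_and] at hσ
          exact Finset.mem_inter.2 ⟨(hfixmem σ x).2 (hσ x hx), hx⟩
        have := Finset.card_le_card this
        omega
      · simp only [hRdef, Finset.mem_filter, hPdef, Finset.mem_univ, true_and, ne_eq] at hσ
        have : I.erase i ⊆ fixSet σ ∩ I := by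
          intro x hx
          exact Finset.mem_inter.2 ⟨(hfixmem σ x).2 (hσ.1 x hx), Finset.mem_of_mem_erase hx⟩
        have hle := Finset.card_le_card this
        rw [Finset.card_erase_of_mem hiI, hIcard] at hle
        omega
  have hdisj : Disjoint (P I) (I.biUnion R) := by
    rw [Finset.disjoint_biUnion_right]
    intro i hi
    rw [Finset.disjoint_left]
    intro σ hσP hσR
    simp only [hRdef, Finset.mem_filter, ne_eq] at hσR
    simp only [hPdef, Finset.mem_filter, Finset.mem_univ, true_and] at hσP
    exact hσR.2 (hσP i hi)
  have hpair : ∀ i ∈ I, ∀ j ∈ I, i ≠ j → Disjoint (R i) (R j) := by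
    intro i hi j hj hij
    rw [Finset.disjoint_left]
    intro σ hσi hσj
    simp only [hRdef, Finset.mem_filter, hPdef, Finset.mem_univ, true_and, ne_eq] at hσi hσj
    exact hσi.2 (hσj.1 i (Finset.mem_erase.2 ⟨hij, hi⟩))
  have hRcard : ∀ i ∈ I, (R i).card + Nat.factorial (t - 2) = Nat.factorial (t - 1) := by
    intro i hi
    have hsplit : (R i).card + ((P (I.erase i)).filter fun σ => σ i = i).card
        = (P (I.erase i)).card := by
      have h := Finset.card_filter_add_card_filter_not
        (s := P (I.erase i)) (p := fun σ => σ i ≠ i)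
      simp only [not_not] at h
      exact h
    have hfe : ((P (I.erase i)).filter fun σ => σ i = i) = P I := by
      ext σ
      simp only [hPdef, Finset.mem_filter, Finset.mem_univ, true_and]
      constructor
      · rintro ⟨h1, h2⟩ x hx
        by_cases hxi : x = i
        · exact hxi ▸ h2
        · exact h1 x (Finset.mem_erase.2 ⟨hxi, hx⟩)
      · intro h
        exact ⟨fun x hx => h x (Finset.mem_of_mem_erase hx), h i hi⟩
    rw [hfe, hPcard, hPcard, hIcard, Finset.card_erase_of_mem hi, hIcard] at hsplit
    have e1 : n - (t + 2 - 1) = t - 1 := by omega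
    have e2 : n - (t + 2) = t - 2 := by omega
    rw [e1, e2] at hsplit
    exact hsplit
  have hQcard : Q.card = Nat.factorial (t - 2) * (t ^ 2 - 3) := by
    obtain ⟨s, rfl⟩ : ∃ s, t = s + 2 := ⟨t - 2, by omega⟩
    have hQc : Q.card = (P I).card + ∑ i ∈ I, (R i).card := by
      rw [hQeq, Finset.card_union_of_disjoint hdisj, Finset.card_biUnion hpair]
    have hRc : ∀ i ∈ I, (R i).card = Nat.factorial (s + 1) - Nat.factorial s := by
      intro i hi
      have := hRcard i hi
      simp only [Nat.add_sub_cancel, show s + 2 - 1 = s + 1 by omega] at this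
      omega
    rw [Finset.sum_congr rfl hRc, Finset.sum_const, hIcard, hPcard, hIcard] at hQc
    have e2 : n - (s + 2 + 2) = s := by omega
    rw [e2] at hQc
    have hfs : Nat.factorial (s + 1) = (s + 1) * Nat.factorial s := Nat.factorial_succ s
    have hsub : Nat.factorial (s + 1) - Nat.factorial s = s * Nat.factorial s := by
      rw [hfs]; cases s <;> simp [Nat.succ_mul] <;> ring_nf <;> omega
    rw [hQc, hsub, smul_eq_mul]
    simp only [Nat.add_sub_cancel]
    have : (s + 2) ^ 2 - 3 = s ^ 2 + 4 * s + 1 := by ring_nf; omega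
    rw [this]; ring
  have hF1card : {σ : Equiv.Perm (Fin n) | t + 1 ≤ (fixSet σ ∩ I).card}.ncard
      = Nat.factorial (t - 2) * (t ^ 2 - 3) := by
    rw [hF1, Set.ncard_coe_finset, hQcard]
  have hfact : Nat.factorial t = Nat.factorial (t - 2) * (t ^ 2 - t) := by
    obtain ⟨s, rfl⟩ : ∃ s, t = s + 2 := ⟨t - 2, by omega⟩
    simp only [Nat.add_sub_cancel]
    rw [show s + 2 = (s + 1) + 1 from rfl, Nat.factorial_succ, Nat.factorial_succ]
    have : (s + 1 + 1) ^ 2 - (s + 1 + 1) = s ^ 2 + 3 * s + 2 := by ring_nf; omega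
    rw [this]; ring
  refine ⟨⟨hF0card, hfact⟩, hF1card, ?_, ?_⟩
  · intro h3
    subst h3
    rw [hF0card, hF1card]
    norm_num [Nat.factorial]
  · intro h3
    rw [hF0card, hF1card, hfact]
    have hpos : 0 < Nat.factorial (t - 2) := Nat.factorial_pos _
    have h2 : t ≤ t ^ 2 := by nlinarith
    have : t ^ 2 - t < t ^ 2 - 3 := by omega
    exact mul_lt_mul_of_pos_left this hpos
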